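/- Let x, y be distinct words of length n over {0,…,q−1}, congruent modulo m (M(x) ≡ M(y) mod m with m ≥ w_{n+1}), and suppose there exist D, E ⊆ {1,…,n} with |D| = |E| ≤ d and x^{(D)} = y^{(E)}. Then 0 < |M(x) − M(y)| < m. -/

import Mathlib

/-- Weight sequence: `W p d i` = w_i(q,d) where p = q-1; w_i = 0 for i ≤ 0 (encoded by
ℕ truncated subtraction together with `W p d 0 = 0`), and w_i = 1 + p·∑_{j=1}^d w_{i-j}
for i ≥ 1. -/
def W (p d : ℕ) : ℕ → ℕ
  | 0 => 0
  | (i+1) => 1 + p * ∑ j ∈ Finset.range d, W p d (i - j)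
decreasing_by exact Nat.lt_succ_of_le (Nat.sub_le i j)

/-- Moment of a word (1-indexed): M(x) = ∑_{i=1}^{n} w_i x_i. -/
def moment (w : ℕ → ℕ) (x : List ℕ) : ℕ :=
  ∑ i ∈ Finset.range x.length, w (i + 1) * x.getD i 0

/-- Deleted word x^{(D)}: delete the symbols at the (1-indexed) positions in D,
keeping the remaining symbols in order. -/
def deleteD (x : List ℕ) (D : Finset ℕ) : List ℕ :=
  ((List.range x.length).filter (fun i => (i + 1) ∉ D)).map (fun i => x.getD i 0)

/-!
If `z` is a common subsequence of `x` and `y` with `|x| ≤ |z| + d`, then pushing the letters of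
`z` to the front can only lower the moment, and by at most `p` times the weights of the last
`|x| - |z| ≤ d` positions, which by the recursion is less than `w (|x| + 1)`. So both moments lie
in `[M(z), M(z) + w (|x| + 1))`. For `M(x) ≠ M(y)`, peel off equal last letters; the prefixes still
share `z` without its last letter, so when the last letters first differ, the larger one outweighs
the difference of the prefixes.
-/

namespace List

variable {α : Type*}

theorem sublist_append_singleton_iff {z l : List α} {a : α} :
    z <+ l ++ [a] ↔ z <+ l ∨ ∃ z', z = z' ++ [a] ∧ z' <+ l := by
  constructor
  · intro h
    obtain ⟨z₁, z₂, rfl, h₁, h₂⟩ := sublist_append_iff.1 h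
    rcases sublist_singleton.1 h₂ with rfl | rfl
    · exact Or.inl (by simpa using h₁)
    · exact Or.inr ⟨z₁, rfl, h₁⟩
  · rintro (h | ⟨z', rfl, h⟩)
    · exact h.trans (sublist_append_left l [a])
    · exact h.append_right [a]

theorem Sublist.dropLast_of_append_singleton {z l : List α} {a : α} (h : z <+ l ++ [a]) :
    z.dropLast <+ l := by
  rcases sublist_append_singleton_iff.1 h with h | ⟨z', rfl, h⟩
  · exact (dropLast_sublist z).trans h
  · simpa using h

end List

open Finset
open scoped List

section Moment

variable {w : ℕ → ℕ}

theorem moment_append_singleton (w : ℕ → ℕ) (l : List ℕ) (a : ℕ) :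
    moment w (l ++ [a]) = moment w l + w (l.length + 1) * a := by
  simp only [moment, List.length_append, List.length_singleton, sum_range_succ,
    List.getD_append_right _ _ _ _ le_rfl, Nat.sub_self, List.getD_cons_zero]
  congr 1
  exact sum_congr rfl fun i hi => by rw [List.getD_append _ _ _ _ (mem_range.1 hi)]

theorem moment_le_moment_of_sublist (hw : Monotone w) {z u : List ℕ} (h : z <+ u) :
    moment w z ≤ moment w u := by
  induction u using List.reverseRecOn generalizing z with
  | nil => rw [List.sublist_nil.1 h]
  | append_singleton u a ih =>
    rw [moment_append_singleton]
    rcases List.sublist_append_singleton_iff.1 h with hz | ⟨z', rfl, hz⟩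
    · exact (ih hz).trans (Nat.le_add_right _ _)
    · rw [moment_append_singleton]
      exact Nat.add_le_add (ih hz) (Nat.mul_le_mul_right a (hw (by simpa using hz.length_le)))

theorem moment_le_moment_add_of_sublist (hw : Monotone w) {p : ℕ} {z u : List ℕ}
    (hu : ∀ a ∈ u, a ≤ p) (h : z <+ u) :
    moment w u ≤ moment w z + p * ∑ i ∈ Ico z.length u.length, w (i + 1) := by
  induction u using List.reverseRecOn generalizing z with
  | nil => simp [List.sublist_nil.1 h, moment]
  | append_singleton u a ih =>
    have ha : a ≤ p := hu a (by simp)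
    have ih := fun {z} => ih (z := z) fun b hb => hu b (by simp [hb])
    rw [moment_append_singleton, List.length_append, List.length_singleton]
    rcases List.sublist_append_singleton_iff.1 h with hz | ⟨z', rfl, hz⟩
    · rw [sum_Ico_succ_top hz.length_le]
      linarith [ih hz, Nat.mul_le_mul_left (w (u.length + 1)) ha]
    · have hzu : z'.length ≤ u.length := hz.length_le
      have hsplit := sum_Ico_succ_top hzu (fun i => w (i + 1))
      rw [sum_eq_sum_Ico_succ_bot (Nat.lt_add_one_of_le hzu)] at hsplit
      have hrearr := mul_add_mul_le_mul_add_mul (hw (Nat.add_le_add_right hzu 1)) ha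
      rw [moment_append_singleton, List.length_append, List.length_singleton]
      linarith [ih hz, congrArg (p * ·) hsplit]

theorem moment_append_singleton_lt {x y : List ℕ} {a b : ℕ}
    (hxy : x.length = y.length) (hab : b < a)
    (h : moment w y < moment w x + w (y.length + 1)) :
    moment w (y ++ [b]) < moment w (x ++ [a]) := by
  rw [moment_append_singleton, moment_append_singleton, hxy]
  linarith [Nat.mul_le_mul_left (w (y.length + 1)) (Nat.succ_le_of_lt hab)]

end Moment

section Weights

variable (p d : ℕ)

theorem W_succ (i : ℕ) : W p d (i + 1) = 1 + p * ∑ j ∈ range d, W p d (i - j) := by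
  rw [W]

theorem W_le_W_succ (i : ℕ) : W p d i ≤ W p d (i + 1) := by
  induction i using Nat.strong_induction_on with
  | _ i ih =>
    rcases i with _ | i
    · simp [W]
    rw [W_succ, W_succ]
    gcongr with j
    rcases le_or_gt j i with hj | hj
    · rw [show i + 1 - j = i - j + 1 by omega]
      exact ih (i - j) (by omega)
    · rw [Nat.sub_eq_zero_of_le hj.le, Nat.sub_eq_zero_of_le hj]

theorem W_monotone : Monotone (W p d) := monotone_nat_of_le_succ (W_le_W_succ p d)

/-- The weights `W p d (L + 1), …, W p d n` are among the `d` weights in the recursion for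
`W p d (n + 1)`. -/
theorem mul_sum_Ico_W_lt {L n : ℕ} (h : n ≤ L + d) :
    p * ∑ i ∈ Ico L n, W p d (i + 1) < W p d (n + 1) := by
  have hreflect : ∑ i ∈ Ico L n, W p d (i + 1) = ∑ j ∈ range (n - L), W p d (n - j) := by
    rw [sum_Ico_eq_sum_range, ← sum_range_reflect]
    refine sum_congr rfl fun j hj => ?_
    rw [mem_range] at hj
    congr 1
    omega
  have hle : ∑ i ∈ Ico L n, W p d (i + 1) ≤ ∑ j ∈ range d, W p d (n - j) := by
    rw [hreflect]
    exact sum_le_sum_of_subset (range_subset_range.2 (by omega))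
  rw [W_succ]
  have := Nat.mul_le_mul_left p hle
  omega

end Weights

section Deletions

variable {p d : ℕ}

theorem moment_W_lt_moment_add_of_sublist {z u v : List ℕ} (hu : ∀ a ∈ u, a ≤ p)
    (hzu : z <+ u) (hzv : z <+ v) (hlen : u.length ≤ z.length + d) :
    moment (W p d) u < moment (W p d) v + W p d (u.length + 1) :=
  calc moment (W p d) u
      ≤ moment (W p d) z + p * ∑ i ∈ Ico z.length u.length, W p d (i + 1) :=
        moment_le_moment_add_of_sublist (W_monotone p d) hu hzu
    _ < moment (W p d) z + W p d (u.length + 1) :=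
        Nat.add_lt_add_left (mul_sum_Ico_W_lt p d hlen) _
    _ ≤ moment (W p d) v + W p d (u.length + 1) :=
        Nat.add_le_add_right (moment_le_moment_of_sublist (W_monotone p d) hzv) _

theorem moment_W_ne_of_sublist {x y z : List ℕ} (hx : ∀ a ∈ x, a ≤ p) (hy : ∀ a ∈ y, a ≤ p)
    (hxy : x.length = y.length) (hzx : z <+ x) (hzy : z <+ y)
    (hlen : x.length ≤ z.length + d) (hne : x ≠ y) :
    moment (W p d) x ≠ moment (W p d) y := by
  induction x using List.reverseRecOn generalizing y z with
  | nil => exact absurd (List.length_eq_zero_iff.1 hxy.symm).symm hne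
  | append_singleton x a ih =>
    obtain ⟨y, b, rfl⟩ : ∃ y' b, y = y' ++ [b] := by
      rcases List.eq_nil_or_concat' y with rfl | h
      · simp at hxy
      · exact h
    have hx' : ∀ c ∈ x, c ≤ p := fun c hc => hx c (by simp [hc])
    have hy' : ∀ c ∈ y, c ≤ p := fun c hc => hy c (by simp [hc])
    have hxy' : x.length = y.length := by simpa using hxy
    have hzx' := hzx.dropLast_of_append_singleton
    have hzy' := hzy.dropLast_of_append_singleton
    have hlen' : x.length ≤ z.dropLast.length + d := by
      simp only [List.length_append, List.length_singleton] at hlen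
      rw [List.length_dropLast]
      omega
    rcases lt_trichotomy a b with hab | rfl | hab
    · exact (moment_append_singleton_lt hxy'.symm hab
        (moment_W_lt_moment_add_of_sublist hx' hzx' hzy' hlen')).ne
    · have hne' : moment (W p d) x ≠ moment (W p d) y :=
        ih hx' hy' hxy' hzx' hzy' hlen' fun h => hne (by rw [h])
      rw [moment_append_singleton, moment_append_singleton, hxy']
      exact fun h => hne' (Nat.add_right_cancel h)
    · exact (moment_append_singleton_lt hxy' hab
        (moment_W_lt_moment_add_of_sublist hy' hzy' hzx' (hxy' ▸ hlen'))).ne'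

end Deletions

theorem deleteD_sublist (x : List ℕ) (D : Finset ℕ) : deleteD x D <+ x := by
  have hx : (List.range x.length).map (x.getD · 0) = x :=
    List.ext_getElem (by simp) fun i _ hi => by simp [hi]
  conv_rhs => rw [← hx]
  exact (List.filter_sublist).map _

theorem length_le_length_deleteD_add_card (x : List ℕ) (D : Finset ℕ) :
    x.length ≤ (deleteD x D).length + D.card := by
  rw [deleteD, List.length_map]
  have hsplit := List.length_eq_length_filter_add (l := List.range x.length)
    (fun i => decide (i + 1 ∉ D))
  set deleted := (List.range x.length).filter (fun i => !decide (i + 1 ∉ D))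
  have hnodup : (deleted.map (· + 1)).Nodup :=
    (List.nodup_range.sublist List.filter_sublist).map (add_left_injective 1)
  have hsub : deleted.map (· + 1) ⊆ D.toList := by
    intro j hj
    simp only [deleted, List.mem_map, List.mem_filter] at hj
    obtain ⟨i, ⟨-, hi⟩, rfl⟩ := hj
    simpa using hi
  have hcard := (hnodup.subperm hsub).length_le
  rw [List.length_map, Finset.length_toList] at hcard
  rw [List.length_range] at hsplit
  omega

theorem moment_diff_strict_bounds_general (q d n m : ℕ)
    (hm : W (q - 1) d (n + 1) ≤ m)
    (x y : List ℕ) (hxlen : x.length = n) (hylen : y.length = n)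
    (hx : ∀ a ∈ x, a < q) (hy : ∀ a ∈ y, a < q) (hne : x ≠ y)
    (D E : Finset ℕ) (hd' : D.card ≤ d)
    (hdel : deleteD x D = deleteD y E) :
    0 < |(moment (W (q - 1) d) x : ℤ) - (moment (W (q - 1) d) y : ℤ)| ∧
      |(moment (W (q - 1) d) x : ℤ) - (moment (W (q - 1) d) y : ℤ)| < m := by
  have hx' : ∀ a ∈ x, a ≤ q - 1 := fun a ha => Nat.le_sub_one_of_lt (hx a ha)
  have hy' : ∀ a ∈ y, a ≤ q - 1 := fun a ha => Nat.le_sub_one_of_lt (hy a ha)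
  have hzx := deleteD_sublist x D
  have hzy : deleteD x D <+ y := hdel ▸ deleteD_sublist y E
  have hlen : x.length ≤ (deleteD x D).length + d :=
    (length_le_length_deleteD_add_card x D).trans (Nat.add_le_add_left hd' _)
  have hxy := moment_W_lt_moment_add_of_sublist hx' hzx hzy hlen
  have hyx := moment_W_lt_moment_add_of_sublist hy' hzy hzx
    (by omega : y.length ≤ (deleteD x D).length + d)
  have hne' := moment_W_ne_of_sublist hx' hy' (by omega) hzx hzy hlen hne
  rw [hxlen] at hxy
  rw [hylen] at hyx
  refine ⟨abs_pos.2 (sub_ne_zero.2 (by exact_mod_cast hne')), abs_sub_lt_iff.2 ⟨?_, ?_⟩⟩ <;> omega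

theorem moment_diff_strict_bounds (q d n m : ℕ) (hq : 2 ≤ q) (hd : 1 ≤ d)
    (hm : W (q - 1) d (n + 1) ≤ m)
    (x y : List ℕ) (hxlen : x.length = n) (hylen : y.length = n)
    (hx : ∀ a ∈ x, a < q) (hy : ∀ a ∈ y, a < q) (hne : x ≠ y)
    (hcong : moment (W (q - 1) d) x ≡ moment (W (q - 1) d) y [MOD m])
    (D E : Finset ℕ) (hD : D ⊆ Finset.Icc 1 n) (hE : E ⊆ Finset.Icc 1 n)
    (hcard : D.card = E.card) (hd' : D.card ≤ d)
    (hdel : deleteD x D = deleteD y E) :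
    0 < |(moment (W (q - 1) d) x : ℤ) - (moment (W (q - 1) d) y : ℤ)| ∧
      |(moment (W (q - 1) d) x : ℤ) - (moment (W (q - 1) d) y : ℤ)| < m :=
  moment_diff_strict_bounds_general q d n m hm x y hxlen hylen hx hy hne D E hd' hdel
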